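/- Let X be a finite metric space with an even number n ≥ 2 of points satisfying t_b(X) < t_d(X), and let k = n/2 − 1. Then for every r with t_b(X) ≤ r < t_d(X), the Vietoris–Rips complex VR_r(X) (simplices are subsets of diameter ≤ r) is isomorphic as a simplicial complex to the (k+1)-dimensional cross-polytope, i.e., the simplicial complex on vertices {±e_1, …, ±e_{k+1}} whose faces are the subsets not containing any antipodal pair {e_i, −e_i}. -/

import Mathlib

/-!
For `t_b(X) ≤ r < t_d(X)` every point `x` has a point at distance `> r` (realising `t_d(x)`),
and only one, since two of them would give `t_b(x) > r`. The map sending `x` to this far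
point is a fixed-point-free involution, so it splits the `2(k+1)` points into `k+1` antipodal
pairs; a subset has diameter `≤ r` exactly when it contains no such pair.
-/

/-- The largest distance from `x` to any point of `X`. -/
noncomputable def ptTd (X : Type*) [MetricSpace X] (x : X) : ℝ :=
  sSup (Set.range fun y => dist x y)

/-- The second largest distance (counted with multiplicity over points) from `x`
to points of `X`. -/
noncomputable def ptTb (X : Type*) [MetricSpace X] (x : X) : ℝ :=
  sSup {r : ℝ | ∃ y z : X, y ≠ z ∧ r = min (dist x y) (dist x z)}

/-- `t_b(X) = max_{x ∈ X} t_b(x)`. -/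
noncomputable def tbX (X : Type*) [MetricSpace X] : ℝ :=
  sSup (Set.range (ptTb X))

/-- `t_d(X) = min_{x ∈ X} t_d(x)`. -/
noncomputable def tdX (X : Type*) [MetricSpace X] : ℝ :=
  sInf (Set.range (ptTd X))

namespace Function.Involutive

variable {α : Type*} {f : α → α}

def pairSetoid (hf : Involutive f) : Setoid α where
  r x y := y = x ∨ y = f x
  iseqv :=
    { refl := fun _ => Or.inl rfl
      symm := fun {x y} h => h.elim (fun h => Or.inl h.symm) fun h => Or.inr (by rw [h, hf x])
      trans := fun {x y z} hxy hyz => by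
        rcases hxy with rfl | rfl <;> rcases hyz with rfl | rfl <;> simp [hf _] }

theorem mk_eq_mk_iff (hf : Involutive f) {x y : α} :
    (⟦x⟧ : Quotient hf.pairSetoid) = ⟦y⟧ ↔ y = x ∨ y = f x :=
  Quotient.eq

theorem mk_apply_eq_mk (hf : Involutive f) (x : α) : (⟦f x⟧ : Quotient hf.pairSetoid) = ⟦x⟧ :=
  (hf.mk_eq_mk_iff).2 (Or.inr (hf x).symm)

theorem out_mk_eq_or (hf : Involutive f) (x : α) :
    (⟦x⟧ : Quotient hf.pairSetoid).out = x ∨ (⟦x⟧ : Quotient hf.pairSetoid).out = f x :=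
  (hf.mk_eq_mk_iff).1 (Quotient.out_eq _).symm

open scoped Classical in
/-- A point is labelled by its pair and by whether it is the chosen representative. -/
noncomputable def toProdBool (hf : Involutive f) (x : α) : Quotient hf.pairSetoid × Bool :=
  (⟦x⟧, decide (x = (⟦x⟧ : Quotient hf.pairSetoid).out))

theorem toProdBool_apply (hf : Involutive f) (hfix : ∀ x, f x ≠ x) (x : α) :
    hf.toProdBool (f x) = ((hf.toProdBool x).1, !(hf.toProdBool x).2) := by
  have hx := (hfix x).symm
  simp only [toProdBool]
  rw [hf.mk_apply_eq_mk]
  rcases hf.out_mk_eq_or x with hout | hout <;> simp [hout, hx, hx.symm]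

theorem toProdBool_bijective (hf : Involutive f) (hfix : ∀ x, f x ≠ x) :
    Bijective hf.toProdBool := by
  refine ⟨fun x y hxy => ?_, fun ⟨q, b⟩ => ?_⟩
  · rcases (hf.mk_eq_mk_iff).1 (congrArg Prod.fst hxy) with rfl | rfl
    · rfl
    · rw [hf.toProdBool_apply hfix, Prod.ext_iff] at hxy
      simp at hxy
  · have hout : hf.toProdBool q.out = (q, true) := by simp [toProdBool]
    cases b
    · exact ⟨f q.out, by rw [hf.toProdBool_apply hfix, hout]; rfl⟩
    · exact ⟨q.out, hout⟩

theorem exists_equiv_fin_prod_bool [Finite α] (hf : Involutive f) (hfix : ∀ x, f x ≠ x) {k : ℕ}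
    (hcard : Nat.card α = 2 * (k + 1)) :
    ∃ e : α ≃ Fin (k + 1) × Bool, ∀ x, e (f x) = ((e x).1, !(e x).2) := by
  let e₀ := Equiv.ofBijective _ (hf.toProdBool_bijective hfix)
  have hQ : Nat.card (Quotient hf.pairSetoid) = k + 1 := by
    have := Nat.card_congr e₀
    rw [Nat.card_prod, Nat.card_eq_fintype_card (α := Bool), Fintype.card_bool] at this
    omega
  refine ⟨e₀.trans ((Finite.equivFinOfCardEq hQ).prodCongr (Equiv.refl Bool)), fun x => ?_⟩
  simp [e₀, hf.toProdBool_apply hfix]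

end Function.Involutive

theorem Finset.forall_apply_notMem_iff {α ι : Type*} [DecidableEq ι] {f : α → α}
    (e : α ≃ ι × Bool) (he : ∀ x, e (f x) = ((e x).1, !(e x).2)) (σ : Finset α) :
    (∀ x ∈ σ, f x ∉ σ) ↔ ∀ i, ¬((i, true) ∈ σ.image e ∧ (i, false) ∈ σ.image e) := by
  constructor
  · rintro h i ⟨htrue, hfalse⟩
    obtain ⟨x, hx, hex⟩ := mem_image.1 htrue
    obtain ⟨y, hy, hey⟩ := mem_image.1 hfalse
    have : f x = y := e.injective (by rw [he, hex, hey]; rfl)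
    exact h x hx (this ▸ hy)
  · intro h x hx hfx
    have h₁ := mem_image_of_mem e hx
    have h₂ := mem_image_of_mem e hfx
    rw [he] at h₂
    rcases hex : e x with ⟨i, b⟩
    rw [hex] at h₁ h₂
    cases b
    exacts [h i ⟨h₂, h₁⟩, h i ⟨h₁, h₂⟩]

section FiniteMetric

variable {X : Type*} [MetricSpace X] [Finite X]

theorem exists_dist_eq_ptTd (x : X) : ∃ y, dist x y = ptTd X x :=
  Set.Nonempty.csSup_mem ⟨_, Set.mem_range_self x⟩ (Set.finite_range _)

theorem tdX_le_ptTd (x : X) : tdX X ≤ ptTd X x :=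
  csInf_le (Set.finite_range _).bddBelow (Set.mem_range_self x)

theorem min_dist_le_tbX {x y z : X} (hyz : y ≠ z) : min (dist x y) (dist x z) ≤ tbX X := by
  have hfin : {t : ℝ | ∃ y z : X, y ≠ z ∧ t = min (dist x y) (dist x z)}.Finite :=
    (Set.finite_range fun p : X × X => min (dist x p.1) (dist x p.2)).subset
      (by rintro t ⟨a, b, -, rfl⟩; exact ⟨(a, b), rfl⟩)
  calc min (dist x y) (dist x z) ≤ ptTb X x := le_csSup hfin.bddAbove ⟨y, z, hyz, rfl⟩
    _ ≤ tbX X := le_csSup (Set.finite_range _).bddAbove (Set.mem_range_self x)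

theorem tbX_nonneg [Nontrivial X] : 0 ≤ tbX X := by
  obtain ⟨y, z, hyz⟩ := exists_pair_ne X
  exact (le_min dist_nonneg dist_nonneg).trans (min_dist_le_tbX (x := y) hyz)

theorem existsUnique_lt_dist {r : ℝ} (hr₁ : tbX X ≤ r) (hr₂ : r < tdX X) (x : X) :
    ∃! y, r < dist x y := by
  obtain ⟨y, hy⟩ := exists_dist_eq_ptTd x
  have hxy : r < dist x y := hy ▸ hr₂.trans_le (tdX_le_ptTd x)
  refine ⟨y, hxy, fun z hxz => ?_⟩
  by_contra hzy
  linarith [min_dist_le_tbX (x := x) hzy, lt_min hxz hxy]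

theorem exists_involutive_lt_dist_iff [Nontrivial X] {r : ℝ} (hr₁ : tbX X ≤ r)
    (hr₂ : r < tdX X) :
    ∃ f : X → X, Function.Involutive f ∧ (∀ x, f x ≠ x) ∧ ∀ x y, r < dist x y ↔ y = f x := by
  choose f hf hfu using existsUnique_lt_dist hr₁ hr₂
  have hfar : ∀ x y, r < dist x y ↔ y = f x := fun x y => ⟨hfu x y, fun h => h ▸ hf x⟩
  refine ⟨f, fun x => ?_, fun x hx => ?_, hfar⟩
  · exact ((hfar _ _).1 (dist_comm x (f x) ▸ hf x)).symm
  · have := hf x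
    rw [hx, dist_self] at this
    linarith [tbX_nonneg (X := X)]

end FiniteMetric

theorem forall_dist_le_iff {X : Type*} [MetricSpace X] {f : X → X} {r : ℝ}
    (hfar : ∀ x y, r < dist x y ↔ y = f x) (σ : Finset X) :
    (∀ x ∈ σ, ∀ y ∈ σ, dist x y ≤ r) ↔ ∀ x ∈ σ, f x ∉ σ := by
  refine forall₂_congr fun x _ => ⟨fun h hfx => ?_, fun h y hy => ?_⟩
  · exact (h _ hfx).not_gt ((hfar _ _).2 rfl)
  · exact not_lt.1 fun hlt => h ((hfar x y).1 hlt ▸ hy)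

theorem vietorisRips_iso_crossPolytope_general {X : Type*} [MetricSpace X] [Fintype X]
    (k : ℕ) (hcard : Fintype.card X = 2 * (k + 1))
    (r : ℝ) (hr₁ : tbX X ≤ r) (hr₂ : r < tdX X) :
    ∃ e : X ≃ Fin (k + 1) × Bool,
      ∀ σ : Finset X,
        (∀ x ∈ σ, ∀ y ∈ σ, dist x y ≤ r) ↔
          ∀ i : Fin (k + 1), ¬ ((i, true) ∈ σ.image e ∧ (i, false) ∈ σ.image e) := by
  have : Nontrivial X := Fintype.one_lt_card_iff_nontrivial.1 (by omega)
  obtain ⟨f, hinv, hfix, hfar⟩ := exists_involutive_lt_dist_iff hr₁ hr₂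
  obtain ⟨e, he⟩ := hinv.exists_equiv_fin_prod_bool hfix (by rwa [Nat.card_eq_fintype_card])
  exact ⟨e, fun σ => (forall_dist_le_iff hfar σ).trans (σ.forall_apply_notMem_iff e he)⟩

/-- If `X` is a finite metric space with an even number `n = 2(k+1) ≥ 2` of points and
`t_b(X) < t_d(X)`, then for every `r ∈ [t_b(X), t_d(X))` the Vietoris–Rips complex
`VR_r(X)` is isomorphic, as a simplicial complex, to the `(k+1)`-dimensional
cross-polytope: there is a bijection of vertex sets under which a subset is a simplex
(has diameter `≤ r`) iff it contains no antipodal pair. -/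
theorem vietorisRips_iso_crossPolytope {X : Type*} [MetricSpace X] [Fintype X]
    (k : ℕ) (hcard : Fintype.card X = 2 * (k + 1))
    (h : tbX X < tdX X) (r : ℝ) (hr₁ : tbX X ≤ r) (hr₂ : r < tdX X) :
    ∃ e : X ≃ Fin (k + 1) × Bool,
      ∀ σ : Finset X,
        (∀ x ∈ σ, ∀ y ∈ σ, dist x y ≤ r) ↔
          ∀ i : Fin (k + 1), ¬ ((i, true) ∈ σ.image e ∧ (i, false) ∈ σ.image e) :=
  vietorisRips_iso_crossPolytope_general k hcard r hr₁ hr₂
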